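/- For every n ≥ 1 and every x ∈ [0,1], the fourth central moment of the modified Durrmeyer operator satisfies D_n^{M,1}((t − x)^4; x) = 12/((n+2)(n+3)(n+4)(n+5)) · { (1−x)^2 x^2 (2a_0(n) + a_1(n)) n^2 + 3(1−x)x(15a_1(n)x^2 + 22x^2 a_0(n) − 15a_1(n)x − 22a_0(n)x + 6a_0(n) + 4a_1(n)) n + 10a_1(n) + 12a_0(n) − 68a_1(n)x + 124x^4 a_0(n) + 202x^2 a_0(n) + 114x^4 a_1(n) + 182a_1(n)x^2 − 78a_0(n)x − 228a_1(n)x^3 − 248a_0(n)x^3 }. -/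

import Mathlib

open Filter Topology

/-- Bernstein basis polynomial `p_{n,k}(x)`, zero when `k < 0` or `k > n`. -/
noncomputable def bern (n : ℕ) (k : ℤ) (x : ℝ) : ℝ :=
  if 0 ≤ k ∧ k ≤ (n : ℤ) then (n.choose k.toNat : ℝ) * x ^ k.toNat * (1 - x) ^ (n - k.toNat)
  else 0

/-- Modified Bernstein basis `p_{n,k}^{M,1}(x)` of Khosravian-Arab et al. -/
noncomputable def pM1 (a0 a1 : ℕ → ℝ) (n : ℕ) (k : ℤ) (x : ℝ) : ℝ :=
  (a1 n * x + a0 n) * bern (n - 1) k x + (a1 n * (1 - x) + a0 n) * bern (n - 1) (k - 1) x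

/-- First-order modified Durrmeyer operator `D_n^{M,1}(f;x)`. -/
noncomputable def DM1 (a0 a1 : ℕ → ℝ) (n : ℕ) (f : ℝ → ℝ) (x : ℝ) : ℝ :=
  ((n : ℝ) + 1) * ∑ k ∈ Finset.range (n + 1),
    pM1 a0 a1 n k x * ∫ t in (0:ℝ)..1, bern n k t * f t

/-!
By the Beta integral, `∫₀¹ p_{n,k}(t) t^j dt = C(k+j, j) / ((n+j+1) C(n+j, j))`. Since
`p^{M,1}_{m+1,k}` mixes `p_{m,k}` and `p_{m,k-1}`, the moment `D^{M,1}_{m+1}(t^j; x)` is a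
combination of the sums `∑ₖ p_{m,k}(x) C(k+r, j)` with `r = j, j+1`. Vandermonde's identity
reduces these to the binomial moments `∑ₖ p_{m,k}(x) C(k, i) = C(m, i) xⁱ`. Expanding
`(t - x)⁴` by the binomial theorem then gives the central moment as an explicit rational
function of `m` and `x`.
-/

open Finset intervalIntegral
open scoped Nat

theorem integral_pow_mul_one_sub_pow (a b : ℕ) :
    ∫ t in (0:ℝ)..1, t ^ a * (1 - t) ^ b = a ! * b ! / (a + b + 1)! := by
  induction b generalizing a with
  | zero =>
    simp only [pow_zero, mul_one, integral_pow, add_zero, Nat.factorial_succ, Nat.factorial_zero]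
    push_cast
    field_simp
    simp
  | succ b ih =>
    have hsplit : ∀ t : ℝ,
        t ^ a * (1 - t) ^ (b + 1) = t ^ a * (1 - t) ^ b - t ^ (a + 1) * (1 - t) ^ b :=
      fun t => by ring
    simp only [hsplit]
    rw [integral_sub (by apply Continuous.intervalIntegrable; fun_prop)
      (by apply Continuous.intervalIntegrable; fun_prop), ih, ih,
      show a + 1 + b + 1 = a + b + 1 + 1 by ring, show a + (b + 1) + 1 = a + b + 1 + 1 by ring,
      Nat.factorial_succ (a + b + 1), Nat.factorial_succ a, Nat.factorial_succ b]
    push_cast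
    field_simp
    ring

theorem bern_natCast_of_le {n k : ℕ} (hk : k ≤ n) (t : ℝ) :
    bern n k t = n.choose k * t ^ k * (1 - t) ^ (n - k) := by
  simp [bern, hk]

theorem bern_natCast_of_lt {n k : ℕ} (hk : n < k) (t : ℝ) : bern n k t = 0 := by
  simp [bern, hk]

theorem bern_of_neg (n : ℕ) {k : ℤ} (hk : k < 0) (t : ℝ) : bern n k t = 0 := by
  simp [bern, hk.not_ge]

theorem continuous_bern (n : ℕ) (k : ℤ) : Continuous (bern n k) := by
  unfold bern
  split <;> fun_prop

theorem integral_bern_mul_pow {n k : ℕ} (hk : k ≤ n) (j : ℕ) :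
    ∫ t in (0:ℝ)..1, bern n k t * t ^ j
      = (k + j).choose j / ((n + j + 1) * (n + j).choose j) := by
  have hpt : ∀ t : ℝ, bern n k t * t ^ j = n.choose k * (t ^ (k + j) * (1 - t) ^ (n - k)) :=
    fun t => by rw [bern_natCast_of_le hk]; ring
  simp only [hpt]
  rw [integral_const_mul, integral_pow_mul_one_sub_pow, Nat.cast_choose ℝ hk,
    Nat.cast_choose ℝ (Nat.le_add_left j k), Nat.cast_choose ℝ (Nat.le_add_left j n),
    Nat.add_sub_cancel, Nat.add_sub_cancel, show k + j + (n - k) + 1 = n + j + 1 by omega,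
    Nat.factorial_succ (n + j)]
  push_cast
  field_simp

theorem sum_bern (m : ℕ) (x : ℝ) : ∑ k ∈ range (m + 1), bern m k x = 1 := by
  have h := (add_pow x (1 - x) m).symm
  rw [add_sub_cancel, one_pow] at h
  rw [← h]
  refine sum_congr rfl fun k hk => ?_
  rw [bern_natCast_of_le (Nat.lt_succ_iff.mp (mem_range.mp hk))]
  ring

theorem sum_bern_mul_choose (m i : ℕ) (x : ℝ) :
    ∑ k ∈ range (m + 1), bern m k x * k.choose i = m.choose i * x ^ i := by
  rcases lt_or_ge m i with hmi | him
  · rw [Nat.choose_eq_zero_of_lt hmi, Nat.cast_zero, zero_mul]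
    refine sum_eq_zero fun k hk => ?_
    rw [Nat.choose_eq_zero_of_lt ((Nat.lt_succ_iff.mp (mem_range.mp hk)).trans_lt hmi)]
    simp
  obtain ⟨r, rfl⟩ := Nat.exists_eq_add_of_le him
  have hlow : ∀ k ∈ range i, bern (i + r) k x * k.choose i = 0 := fun k hk => by
    simp [Nat.choose_eq_zero_of_lt (mem_range.mp hk)]
  have hhigh : ∀ l ∈ range (r + 1), bern (i + r) ↑(i + l) x * (i + l).choose i
      = (i + r).choose i * x ^ i * bern r l x := fun l hl => by
    have hl : l ≤ r := Nat.lt_succ_iff.mp (mem_range.mp hl)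
    have hchoose :
        ((i + r).choose (i + l) : ℝ) * (i + l).choose i = (i + r).choose i * r.choose l := by
      have := Nat.choose_mul (n := i + r) (k := i + l) (s := i) (Nat.le_add_right i l)
      rw [Nat.add_sub_cancel_left, Nat.add_sub_cancel_left] at this
      exact_mod_cast this
    rw [bern_natCast_of_le (by omega), bern_natCast_of_le hl,
      show i + r - (i + l) = r - l by omega]
    linear_combination (x ^ i * x ^ l * (1 - x) ^ (r - l)) * hchoose
  rw [show i + r + 1 = i + (r + 1) by ring, sum_range_add, sum_eq_zero hlow, zero_add,
    sum_congr rfl hhigh, ← mul_sum, sum_bern, mul_one]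

theorem sum_bern_mul_add_choose (m r j : ℕ) (x : ℝ) :
    ∑ k ∈ range (m + 1), bern m k x * (k + r).choose j
      = ∑ i ∈ range (j + 1), r.choose (j - i) * m.choose i * x ^ i := by
  have hvandermonde : ∀ k : ℕ, ((k + r).choose j : ℝ)
      = ∑ i ∈ range (j + 1), (k.choose i : ℝ) * r.choose (j - i) := fun k => by
    rw [Nat.add_choose_eq,
      Nat.sum_antidiagonal_eq_sum_range_succ (fun a b => k.choose a * r.choose b)]
    push_cast
    rfl
  simp only [hvandermonde, mul_sum]
  rw [sum_comm]
  refine sum_congr rfl fun i _ => ?_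
  simp only [← mul_assoc, ← sum_mul, sum_bern_mul_choose]
  ring

theorem sum_pM1_mul (a0 a1 : ℕ → ℝ) (n : ℕ) (g : ℕ → ℝ) (x : ℝ) :
    ∑ k ∈ range (n + 2), pM1 a0 a1 (n + 1) k x * g k
      = (a1 (n + 1) * x + a0 (n + 1)) * ∑ k ∈ range (n + 1), bern n k x * g k
        + (a1 (n + 1) * (1 - x) + a0 (n + 1))
          * ∑ k ∈ range (n + 1), bern n k x * g (k + 1) := by
  have hsplit : ∀ k : ℕ, pM1 a0 a1 (n + 1) k x * g k
      = (a1 (n + 1) * x + a0 (n + 1)) * (bern n k x * g k)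
        + (a1 (n + 1) * (1 - x) + a0 (n + 1)) * (bern n (k - 1) x * g k) := fun k => by
    rw [pM1, Nat.add_sub_cancel]
    ring
  simp only [hsplit, sum_add_distrib, ← mul_sum]
  rw [sum_range_succ, bern_natCast_of_lt (Nat.lt_succ_self n), sum_range_succ' _ (n + 1),
    bern_of_neg n (by norm_num)]
  simp

theorem DM1_const_mul (a0 a1 : ℕ → ℝ) (n : ℕ) (c : ℝ) (f : ℝ → ℝ) (x : ℝ) :
    DM1 a0 a1 n (fun t => c * f t) x = c * DM1 a0 a1 n f x := by
  simp only [DM1, mul_left_comm _ c, integral_const_mul, ← mul_sum]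

theorem DM1_sum {ι : Type*} (a0 a1 : ℕ → ℝ) (n : ℕ) (s : Finset ι)
    (f : ι → ℝ → ℝ) (hf : ∀ i ∈ s, Continuous (f i)) (x : ℝ) :
    DM1 a0 a1 n (fun t => ∑ i ∈ s, f i t) x = ∑ i ∈ s, DM1 a0 a1 n (f i) x := by
  have hintegral : ∀ k : ℕ, ∫ t in (0:ℝ)..1, bern n k t * ∑ i ∈ s, f i t
      = ∑ i ∈ s, ∫ t in (0:ℝ)..1, bern n k t * f i t := fun k => by
    simp only [mul_sum]
    exact integral_finsetSum fun i hi =>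
      ((continuous_bern n k).mul (hf i hi)).intervalIntegrable 0 1
  simp only [DM1, hintegral]
  simp only [mul_sum]
  exact Finset.sum_comm

theorem DM1_pow (a0 a1 : ℕ → ℝ) (m j : ℕ) (x : ℝ) :
    DM1 a0 a1 (m + 1) (fun t => t ^ j) x
      = (m + 2) / ((m + j + 2) * (m + 1 + j).choose j)
        * ((a1 (m + 1) * x + a0 (m + 1))
            * ∑ i ∈ range (j + 1), j.choose (j - i) * m.choose i * x ^ i
          + (a1 (m + 1) * (1 - x) + a0 (m + 1))
            * ∑ i ∈ range (j + 1), (j + 1).choose (j - i) * m.choose i * x ^ i) := by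
  have hintegral : ∀ k ∈ range (m + 1 + 1),
      pM1 a0 a1 (m + 1) k x * ∫ t in (0:ℝ)..1, bern (m + 1) k t * t ^ j
        = pM1 a0 a1 (m + 1) k x * (k + j).choose j / ((m + j + 2) * (m + 1 + j).choose j) :=
    fun k hk => by
      rw [integral_bern_mul_pow (Nat.lt_succ_iff.mp (mem_range.mp hk))]
      push_cast
      ring
  rw [DM1, sum_congr rfl hintegral, ← sum_div,
    sum_pM1_mul a0 a1 m (fun k => ((k + j).choose j : ℝ)),
    ← sum_bern_mul_add_choose m j j, ← sum_bern_mul_add_choose m (j + 1) j]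
  simp only [add_assoc, add_comm 1 j]
  push_cast
  ring

theorem DM1_central_moment_four_general (a0 a1 : ℕ → ℝ) (n : ℕ) (hn : 1 ≤ n)
    (x : ℝ) :
    DM1 a0 a1 n (fun t => (t - x) ^ 4) x
      = 12 / (((n : ℝ) + 2) * ((n : ℝ) + 3) * ((n : ℝ) + 4) * ((n : ℝ) + 5))
        * ((1 - x) ^ 2 * x ^ 2 * (2 * a0 n + a1 n) * (n : ℝ) ^ 2
          + 3 * (1 - x) * x * (15 * a1 n * x ^ 2 + 22 * x ^ 2 * a0 n - 15 * a1 n * x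
              - 22 * a0 n * x + 6 * a0 n + 4 * a1 n) * (n : ℝ)
          + 10 * a1 n + 12 * a0 n - 68 * a1 n * x + 124 * x ^ 4 * a0 n + 202 * x ^ 2 * a0 n
          + 114 * x ^ 4 * a1 n + 182 * a1 n * x ^ 2 - 78 * a0 n * x - 228 * a1 n * x ^ 3
          - 248 * a0 n * x ^ 3) := by
  obtain ⟨m, rfl⟩ : ∃ m, n = m + 1 := ⟨n - 1, by omega⟩
  have hbinomial : (fun t : ℝ => (t - x) ^ 4)
      = fun t => ∑ j ∈ range 5, (-x) ^ (4 - j) * (4 : ℕ).choose j * t ^ j := by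
    funext t
    rw [sub_eq_add_neg, add_pow]
    exact sum_congr rfl fun j _ => by ring
  rw [hbinomial, DM1_sum _ _ _ _ _ fun j _ => by fun_prop]
  simp only [DM1_const_mul, DM1_pow, sum_range_succ, sum_range_zero, Nat.reduceSub,
    Nat.reduceAdd]
  simp only [Nat.cast_choose_eq_descPochhammer_div]
  simp only [descPochhammer_succ_eval, descPochhammer_zero, Polynomial.eval_one]
  push_cast [Nat.factorial, add_sub_assoc]
  norm_num
  field_simp
  ring

theorem DM1_central_moment_four (a0 a1 : ℕ → ℝ) (n : ℕ) (hn : 1 ≤ n)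
    (x : ℝ) (hx : x ∈ Set.Icc (0:ℝ) 1) :
    DM1 a0 a1 n (fun t => (t - x) ^ 4) x
      = 12 / (((n : ℝ) + 2) * ((n : ℝ) + 3) * ((n : ℝ) + 4) * ((n : ℝ) + 5))
        * ((1 - x) ^ 2 * x ^ 2 * (2 * a0 n + a1 n) * (n : ℝ) ^ 2
          + 3 * (1 - x) * x * (15 * a1 n * x ^ 2 + 22 * x ^ 2 * a0 n - 15 * a1 n * x
              - 22 * a0 n * x + 6 * a0 n + 4 * a1 n) * (n : ℝ)
          + 10 * a1 n + 12 * a0 n - 68 * a1 n * x + 124 * x ^ 4 * a0 n + 202 * x ^ 2 * a0 n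
          + 114 * x ^ 4 * a1 n + 182 * a1 n * x ^ 2 - 78 * a0 n * x - 228 * a1 n * x ^ 3
          - 248 * a0 n * x ^ 3) :=
  DM1_central_moment_four_general a0 a1 n hn x
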